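/- arXiv:2308.07246 — 6 statements merged into one kernel-verified Lean document; each statement's English description precedes it below -/
import Mathlib

section
/- Let n ≥ 1 and let L ∈ ℝ^{n×n} satisfy L𝟙 = 0 and 𝟙ᵀL = 0, and set σ = ‖I − Π − L‖ where Π = (1/n)𝟙𝟙ᵀ and ‖·‖ is the ℓ² operator (spectral) norm. If σ < 1, then for every y ∈ ℝⁿ the quadratic constraint (σ² − 1)·yᵀ(I − Π)y + 2·yᵀ(I − Π)(Ly) − (Ly)ᵀ(I − Π)(Ly) ≥ 0 holds; equivalently, the pair (y, Ly) satisfies the sector quadratic constraint with matrix [[(σ²−1)(I−Π), (I−Π)],[(I−Π), −(I−Π)]]. -/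
open Matrix

/-- The ℓ² operator (spectral) norm of a real square matrix. -/
noncomputable def spectralNormL2 {n : ℕ} (M : Matrix (Fin n) (Fin n) ℝ) : ℝ :=
  ‖Matrix.toEuclideanCLM (𝕜 := ℝ) M‖

/-- The all-ones vector 𝟙 ∈ ℝⁿ. -/
def onesVec (n : ℕ) : Fin n → ℝ := fun _ => 1

/-- The projection Π = (1/n)𝟙𝟙ᵀ onto the consensus subspace. -/
noncomputable def consensusProj (n : ℕ) : Matrix (Fin n) (Fin n) ℝ :=
  Matrix.of fun _ _ => (n : ℝ)⁻¹

/-!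
Put `P = I − Π`, a symmetric projection with `PL = L` (as `𝟙ᵀL = 0`), and `M = I − Π − L = P − L`.
Completing the square, the quadratic form equals `σ²‖Py‖² − ‖My‖²`; and `MΠ = 0` (as `L𝟙 = 0`)
gives `My = M(Py)`, whence `‖My‖ ≤ σ‖Py‖`.
-/

open scoped Matrix.Norms.L2Operator

section QuadraticForm

variable {R ι : Type*} [CommRing R] [Fintype ι]

theorem dotProduct_mulVec_eq_mulVec_dotProduct_mulVec {P : Matrix ι ι R} (hPt : Pᵀ = P)
    (hP : IsIdempotentElem P) (x y : ι → R) :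
    x ⬝ᵥ (P *ᵥ y) = (P *ᵥ x) ⬝ᵥ (P *ᵥ y) := by
  conv_lhs => rw [← hP.eq, ← mulVec_mulVec, dotProduct_mulVec, ← mulVec_transpose, hPt]

theorem sector_form_eq_sub {P L : Matrix ι ι R} (hPt : Pᵀ = P) (hP : IsIdempotentElem P)
    (hPL : P * L = L) (s : R) (y : ι → R) :
    (s - 1) * (y ⬝ᵥ (P *ᵥ y)) + 2 * (y ⬝ᵥ (P *ᵥ (L *ᵥ y))) - ((L *ᵥ y) ⬝ᵥ (P *ᵥ (L *ᵥ y)))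
      = s * ((P *ᵥ y) ⬝ᵥ (P *ᵥ y)) - ((P - L) *ᵥ y) ⬝ᵥ ((P - L) *ᵥ y) := by
  have hPLy : P *ᵥ (L *ᵥ y) = L *ᵥ y := by rw [mulVec_mulVec, hPL]
  rw [dotProduct_mulVec_eq_mulVec_dotProduct_mulVec hPt hP y y,
    dotProduct_mulVec_eq_mulVec_dotProduct_mulVec hPt hP y (L *ᵥ y), hPLy, sub_mulVec,
    dotProduct_sub, sub_dotProduct, sub_dotProduct, dotProduct_comm (L *ᵥ y) (P *ᵥ y)]
  ring

end QuadraticForm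

theorem dotProduct_self_eq_norm_sq {ι : Type*} [Fintype ι] (v : ι → ℝ) :
    v ⬝ᵥ v = ‖(EuclideanSpace.equiv ι ℝ).symm v‖ ^ 2 := by
  rw [EuclideanSpace.real_norm_sq_eq]
  simp [dotProduct, sq]

theorem mulVec_dotProduct_self_le {m n : Type*} [Fintype m] [Fintype n] [DecidableEq n]
    (A : Matrix m n ℝ) (x : n → ℝ) :
    (A *ᵥ x) ⬝ᵥ (A *ᵥ x) ≤ ‖A‖ ^ 2 * (x ⬝ᵥ x) := by
  rw [dotProduct_self_eq_norm_sq, dotProduct_self_eq_norm_sq, ← mul_pow]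
  exact pow_le_pow_left₀ (norm_nonneg _) (A.l2_opNorm_mulVec _) 2

theorem spectralNormL2_eq_l2_opNorm {n : ℕ} (M : Matrix (Fin n) (Fin n) ℝ) :
    spectralNormL2 M = ‖M‖ :=
  rfl

theorem isIdempotentElem_consensusProj (n : ℕ) : IsIdempotentElem (consensusProj n) := by
  ext i j
  simp only [consensusProj, mul_apply, of_apply, Finset.sum_const, Finset.card_univ,
    Fintype.card_fin, nsmul_eq_mul]
  by_cases hn : (n : ℝ) = 0 <;> simp [hn]

theorem consensusProj_transpose (n : ℕ) : (consensusProj n)ᵀ = consensusProj n :=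
  rfl

theorem consensusProj_mul_eq_zero {n : ℕ} {L : Matrix (Fin n) (Fin n) ℝ}
    (hL : onesVec n ᵥ* L = 0) : consensusProj n * L = 0 := by
  ext i j
  have hcol := congrFun hL j
  simp only [vecMul, dotProduct, onesVec, one_mul, Pi.zero_apply] at hcol
  simp [consensusProj, mul_apply, ← Finset.mul_sum, hcol]

theorem mul_consensusProj_eq_zero {n : ℕ} {L : Matrix (Fin n) (Fin n) ℝ}
    (hL : L *ᵥ onesVec n = 0) : L * consensusProj n = 0 := by
  ext i j
  have hrow := congrFun hL i
  simp only [mulVec, dotProduct, onesVec, mul_one, Pi.zero_apply] at hrow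
  simp [consensusProj, mul_apply, ← Finset.sum_mul, hrow]

theorem laplacian_sector_iqc_general {n : ℕ} (L : Matrix (Fin n) (Fin n) ℝ)
    (hL1 : L *ᵥ onesVec n = 0) (hL2 : onesVec n ᵥ* L = 0)
    (σ : ℝ) (hσ : σ = spectralNormL2 (1 - consensusProj n - L)) :
    ∀ y : Fin n → ℝ,
      (σ ^ 2 - 1) * (y ⬝ᵥ ((1 - consensusProj n) *ᵥ y))
        + 2 * (y ⬝ᵥ ((1 - consensusProj n) *ᵥ (L *ᵥ y)))
        - ((L *ᵥ y) ⬝ᵥ ((1 - consensusProj n) *ᵥ (L *ᵥ y))) ≥ 0 := by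
  intro y
  have hIdem := isIdempotentElem_consensusProj n
  have hPt : (1 - consensusProj n)ᵀ = 1 - consensusProj n := by
    rw [transpose_sub, transpose_one, consensusProj_transpose]
  have hPL : (1 - consensusProj n) * L = L := by
    rw [sub_mul, one_mul, consensusProj_mul_eq_zero hL2, sub_zero]
  have hMy : (1 - consensusProj n - L) *ᵥ y
      = (1 - consensusProj n - L) *ᵥ ((1 - consensusProj n) *ᵥ y) := by
    rw [mulVec_mulVec, mul_sub, mul_one, sub_mul, sub_mul, one_mul, hIdem.eq,
      mul_consensusProj_eq_zero hL1, sub_self, sub_zero, sub_zero]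
  rw [sector_form_eq_sub hPt hIdem.one_sub hPL, hMy, ge_iff_le, sub_nonneg, hσ,
    spectralNormL2_eq_l2_opNorm]
  exact mulVec_dotProduct_self_le _ _

/-- If `L𝟙 = 0`, `𝟙ᵀL = 0` and `σ = ‖I − Π − L‖ < 1`, then for every
`y ∈ ℝⁿ` the pair `(y, Ly)` satisfies the sector quadratic constraint
`(σ² − 1)·yᵀ(I − Π)y + 2·yᵀ(I − Π)(Ly) − (Ly)ᵀ(I − Π)(Ly) ≥ 0`. -/
theorem laplacian_sector_iqc {n : ℕ} (hn : 1 ≤ n) (L : Matrix (Fin n) (Fin n) ℝ)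
    (hL1 : L *ᵥ onesVec n = 0) (hL2 : onesVec n ᵥ* L = 0)
    (σ : ℝ) (hσ : σ = spectralNormL2 (1 - consensusProj n - L)) (hσ1 : σ < 1) :
    ∀ y : Fin n → ℝ,
      (σ ^ 2 - 1) * (y ⬝ᵥ ((1 - consensusProj n) *ᵥ y))
        + 2 * (y ⬝ᵥ ((1 - consensusProj n) *ᵥ (L *ᵥ y)))
        - ((L *ᵥ y) ⬝ᵥ ((1 - consensusProj n) *ᵥ (L *ᵥ y))) ≥ 0 :=
  laplacian_sector_iqc_general L hL1 hL2 σ hσ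
end

section
/- Assume L ∈ ℝ^{n×n} satisfies L𝟙 = 0 and 𝟙ᵀL = 0; let 0 < μ ≤ L_f, x_opt ∈ ℝ, and let g_1, …, g_n : ℝ → ℝ satisfy Σᵢ g_i(x_opt) = 0 and the sector bound on (μ, L_f) about x_opt; let α ≠ 0 and ζ, δ, η ∈ ℝ. Then every fixed point (w1*, ŵ2*, x*, ŷ*, u*, v*) ∈ (ℝⁿ)⁶ of the projected dynamics G_m, i.e., every tuple satisfying w1* = w1* − αu* − ζv*, ŵ2* = (I − Π)(w1* + ŵ2* − v*), x* = w1* − v*, ŷ* = δw1* + ηŵ2*, u* = F(x*), v* = Lŷ*, is optimal: x* = x_opt 𝟙, i.e., x*_i = x_opt for all i. -/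
open Matrix

/-- Every fixed point of the projected dynamics `G_m` is optimal:
the estimate component `x*` is the consensus vector `x_opt 𝟙`. -/
theorem fixed_point_optimal {n : ℕ} (hn : 1 ≤ n) (L : Matrix (Fin n) (Fin n) ℝ)
    (hL1 : L *ᵥ onesVec n = 0) (hL2 : onesVec n ᵥ* L = 0)
    (μ Lf x_opt : ℝ) (hμ : 0 < μ) (hμL : μ ≤ Lf)
    (g : Fin n → ℝ → ℝ)
    (hopt : ∑ i, g i x_opt = 0)
    (hsec : ∀ i : Fin n, ∀ x : ℝ,
      -2 * μ * Lf * (x - x_opt) ^ 2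
        + 2 * (Lf + μ) * (x - x_opt) * (g i x - g i x_opt)
        - 2 * (g i x - g i x_opt) ^ 2 ≥ 0)
    (α ζ δ η : ℝ) (hα : α ≠ 0)
    (w1s w2s xs ys us vs : Fin n → ℝ)
    (hfix1 : w1s = w1s - α • us - ζ • vs)
    (hfix2 : w2s = (1 - consensusProj n) *ᵥ (w1s + w2s - vs))
    (hfix3 : xs = w1s - vs)
    (hfix4 : ys = δ • w1s + η • w2s)
    (hfix5 : us = fun i => g i (xs i))
    (hfix6 : vs = L *ᵥ ys) :
    xs = fun _ => x_opt := by
  have hnR : (0 : ℝ) < (n : ℝ) := by exact_mod_cast Nat.lt_of_lt_of_le Nat.zero_lt_one hn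
  -- xs is constant: xs i = (1/n) ∑ j (w1s j + w2s j - vs j)
  set c : ℝ := (n : ℝ)⁻¹ * ∑ j, (w1s j + w2s j - vs j) with hc
  have hxs : ∀ i, xs i = c := by
    intro i
    have h2 := congrFun hfix2 i
    have hproj : ((1 - consensusProj n) *ᵥ (w1s + w2s - vs)) i
        = (w1s i + w2s i - vs i) - (n : ℝ)⁻¹ * ∑ j, (w1s j + w2s j - vs j) := by
      rw [Matrix.sub_mulVec]
      simp only [Matrix.one_mulVec, Pi.sub_apply, Pi.add_apply,
        Matrix.mulVec, dotProduct, consensusProj, Matrix.of_apply, ← Finset.mul_sum]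
    rw [hproj] at h2
    have := congrFun hfix3 i
    simp only [Pi.sub_apply] at this
    rw [this]
    linarith [h2]
  -- ∑ vs = 0
  have hv : ∑ i, vs i = 0 := by
    have : ∑ i, vs i = ∑ j, (onesVec n ᵥ* L) j * ys j := by
      rw [hfix6]
      simp only [Matrix.mulVec, Matrix.vecMul, dotProduct, onesVec, one_mul, Finset.sum_mul]
      rw [Finset.sum_comm]
    rw [hL2] at this
    simpa using this
  -- ∑ us = 0
  have hu : ∑ i, us i = 0 := by
    have h1 : ∀ i, α * us i + ζ * vs i = 0 := by
      intro i
      have := congrFun hfix1 i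
      simp only [Pi.sub_apply, Pi.smul_apply, smul_eq_mul] at this
      linarith
    have : ∑ i, (α * us i + ζ * vs i) = 0 := by
      simp [h1]
    rw [Finset.sum_add_distrib, ← Finset.mul_sum, ← Finset.mul_sum, hv, mul_zero, add_zero] at this
    exact (mul_eq_zero.mp this).resolve_left hα
  -- so ∑ g i c = 0
  have hgc : ∑ i, g i c = 0 := by
    rw [hfix5] at hu
    simpa [hxs] using hu
  -- sum the sector bound at c
  have hsum : ∑ i, (-2 * μ * Lf * (c - x_opt) ^ 2
      + 2 * (Lf + μ) * (c - x_opt) * (g i c - g i x_opt)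
      - 2 * (g i c - g i x_opt) ^ 2) ≥ 0 :=
    Finset.sum_nonneg fun i _ => hsec i c
  have hexp : ∑ i, (-2 * μ * Lf * (c - x_opt) ^ 2
      + 2 * (Lf + μ) * (c - x_opt) * (g i c - g i x_opt)
      - 2 * (g i c - g i x_opt) ^ 2)
      = -2 * μ * Lf * (c - x_opt) ^ 2 * n
      - 2 * ∑ i, (g i c - g i x_opt) ^ 2 := by
    simp only [Finset.sum_sub_distrib, Finset.sum_add_distrib, ← Finset.mul_sum,
      Finset.sum_const, Finset.card_univ, Fintype.card_fin, nsmul_eq_mul, hgc, hopt]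
    ring
  rw [hexp] at hsum
  have hsq : (0:ℝ) ≤ ∑ i, (g i c - g i x_opt) ^ 2 :=
    Finset.sum_nonneg fun i _ => sq_nonneg _
  have hpos : 0 < μ * Lf * n := mul_pos (mul_pos hμ (lt_of_lt_of_le hμ hμL)) hnR
  have hq : (c - x_opt) ^ 2 ≤ 0 := by nlinarith
  have hq0 : (c - x_opt) ^ 2 = 0 := le_antisymm hq (sq_nonneg _)
  have hcx : c = x_opt := by
    have := pow_eq_zero_iff (n := 2) (by norm_num) |>.mp hq0
    linarith
  funext i
  rw [hxs i, hcx]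
end

section
/- Assume L ∈ ℝ^{n×n} satisfies L𝟙 = 0, 𝟙ᵀL = 0, and ker L = span{𝟙}; let 0 < μ ≤ L_f, x_opt ∈ ℝ, and let g_1, …, g_n : ℝ → ℝ satisfy Σᵢ g_i(x_opt) = 0 and the sector bound on (μ, L_f) about x_opt; let α ≠ 0, ζ ≠ 0, η ≠ 0 and δ ∈ ℝ. Then there exists exactly one fixed point (w1*, ŵ2*, x*, ŷ*, u*, v*) ∈ (ℝⁿ)⁶ of the projected dynamics G_m (i.e., w1* = w1* − αu* − ζv*, ŵ2* = (I − Π)(w1* + ŵ2* − v*), x* = w1* − v*, ŷ* = δw1* + ηŵ2*, u* = F(x*), v* = Lŷ*), and it satisfies x* = x_opt 𝟙, u* = F(x*), v* = −(α/ζ)u*, w1* = x* + v*, and ζη L ŵ2* = −α(I − δL)u* with Πŵ2* = 0. -/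
/-!
At a fixed point the `w1`-update says `ζ v = -α u`; since `v = L ŷ` has zero sum (`𝟙ᵀ L = 0`),
so has `u = F(x)`. The `ŵ2`-update gives `Π ŵ2 = 0` and then `Π x = x`, so `x = c 𝟙` with
`∑ g_i(c) = 0`. Summing the sector bounds over `i`, the cross terms cancel and leave
`n μ L_f (c - x_opt)² ≤ 0`, so `c = x_opt`. This fixes `x, u, v, w1`, and `ŵ2` is the unique
solution with `Π ŵ2 = 0` of `ζη L ŵ2 = -α (I - δL) u`; it exists because the right side has zero
sum and, by rank–nullity, `ker L = span 𝟙` together with `𝟙ᵀ L = 0` makes `range L = 𝟙^⊥`.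
-/

open Matrix

/-- A tuple `(w1*, ŵ2*, x*, ŷ*, u*, v*)` is a fixed point of the projected
dynamics `G_m` with parameters `α, ζ, δ, η`. -/
def IsFixedGm {n : ℕ} (L : Matrix (Fin n) (Fin n) ℝ) (g : Fin n → ℝ → ℝ)
    (α ζ δ η : ℝ)
    (p : (Fin n → ℝ) × (Fin n → ℝ) × (Fin n → ℝ) × (Fin n → ℝ) ×
      (Fin n → ℝ) × (Fin n → ℝ)) : Prop :=
  p.1 = p.1 - α • p.2.2.2.2.1 - ζ • p.2.2.2.2.2 ∧
  p.2.1 = (1 - consensusProj n) *ᵥ (p.1 + p.2.1 - p.2.2.2.2.2) ∧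
  p.2.2.1 = p.1 - p.2.2.2.2.2 ∧
  p.2.2.2.1 = δ • p.1 + η • p.2.1 ∧
  p.2.2.2.2.1 = (fun i => g i (p.2.2.1 i)) ∧
  p.2.2.2.2.2 = L *ᵥ p.2.2.2.1

def SectorBound (μ Lf x_opt : ℝ) (f : ℝ → ℝ) : Prop :=
  ∀ x : ℝ, -2 * μ * Lf * (x - x_opt) ^ 2
    + 2 * (Lf + μ) * (x - x_opt) * (f x - f x_opt) - 2 * (f x - f x_opt) ^ 2 ≥ 0

theorem eq_of_sum_eq_zero_of_sectorBound {ι : Type*} [Fintype ι] [Nonempty ι]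
    {μ Lf x_opt : ℝ} (hμLf : 0 < μ * Lf) {g : ι → ℝ → ℝ}
    (hsec : ∀ i, SectorBound μ Lf x_opt (g i)) (hopt : ∑ i, g i x_opt = 0)
    {c : ℝ} (hc : ∑ i, g i c = 0) : c = x_opt := by
  have hle : ∑ _i : ι, μ * Lf * (c - x_opt) ^ 2
      ≤ ∑ i, (Lf + μ) * (c - x_opt) * (g i c - g i x_opt) :=
    Finset.sum_le_sum fun i _ => by nlinarith [hsec i c, sq_nonneg (g i c - g i x_opt)]
  rw [Finset.sum_const, nsmul_eq_mul, ← Finset.mul_sum, Finset.sum_sub_distrib, hc, hopt,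
    sub_zero, mul_zero] at hle
  have hcard : (0 : ℝ) < Fintype.card ι := by exact_mod_cast Fintype.card_pos
  have hsq : (c - x_opt) ^ 2 ≤ 0 := by
    by_contra! h
    exact hle.not_gt (by positivity)
  exact sub_eq_zero.mp (pow_eq_zero_iff two_ne_zero |>.mp (le_antisymm hsq (sq_nonneg _)))

theorem sum_mulVec_eq_zero {m n R : Type*} [Fintype m] [Fintype n] [Semiring R]
    {L : Matrix m n R} (hL : 1 ᵥ* L = 0) (v : n → R) : ∑ i, (L *ᵥ v) i = 0 := by
  rw [← one_dotProduct, dotProduct_mulVec, hL, zero_dotProduct]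

theorem exists_mulVec_eq_of_sum_eq_zero {ι K : Type*} [Fintype ι] [Nonempty ι] [Field K]
    {L : Matrix ι ι K} (hL : 1 ᵥ* L = 0)
    (hker : ∀ v : ι → K, L *ᵥ v = 0 ↔ ∃ c : K, v = fun _ => c)
    {z : ι → K} (hz : ∑ i, z i = 0) : ∃ w, L *ᵥ w = z := by
  classical
  let sum : (ι → K) →ₗ[K] K := Fintype.linearCombination K (fun _ => 1)
  have hsum (v : ι → K) : sum v = ∑ i, v i := by simp [sum, Fintype.linearCombination_apply]
  have hker_L : LinearMap.ker L.mulVecLin = K ∙ (1 : ι → K) := by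
    ext v
    simp only [LinearMap.mem_ker, mulVecLin_apply, hker, Submodule.mem_span_singleton, eq_comm]
    exact exists_congr fun c => by rw [show c • (1 : ι → K) = fun _ => c by ext; simp]
  have hrange_le : LinearMap.range L.mulVecLin ≤ LinearMap.ker sum := by
    rintro _ ⟨v, rfl⟩
    rw [LinearMap.mem_ker, hsum, mulVecLin_apply, sum_mulVec_eq_zero hL]
  have hsum_surj : LinearMap.range sum = ⊤ :=
    LinearMap.range_eq_top.mpr fun r => ⟨Pi.single (Classical.arbitrary ι) r, by simp [hsum]⟩
  have hdim_L := LinearMap.finrank_range_add_finrank_ker L.mulVecLin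
  have hdim_sum := LinearMap.finrank_range_add_finrank_ker sum
  rw [hker_L, finrank_span_singleton one_ne_zero] at hdim_L
  rw [hsum_surj, finrank_top, Module.finrank_self] at hdim_sum
  have hrange : LinearMap.range L.mulVecLin = LinearMap.ker sum :=
    Submodule.eq_of_le_of_finrank_eq hrange_le (by omega)
  obtain ⟨w, hw⟩ : z ∈ LinearMap.range L.mulVecLin := by
    rw [hrange, LinearMap.mem_ker, hsum, hz]
  exact ⟨w, hw⟩

section consensusProj

variable {n : ℕ}

theorem consensusProj_mulVec (w : Fin n → ℝ) :
    consensusProj n *ᵥ w = fun _ => (n : ℝ)⁻¹ * ∑ j, w j := by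
  ext i
  simp [consensusProj, mulVec, dotProduct, Finset.mul_sum]

variable [NeZero n]

theorem consensusProj_mulVec_const (c : ℝ) :
    consensusProj n *ᵥ (fun _ => c) = fun _ => c := by
  ext i
  simp [consensusProj_mulVec, NeZero.ne]

theorem consensusProj_mul_self : consensusProj n * consensusProj n = consensusProj n := by
  ext i j
  simp [consensusProj, mul_apply, NeZero.ne]

theorem consensusProj_mulVec_one_sub_mulVec (w : Fin n → ℝ) :
    consensusProj n *ᵥ ((1 - consensusProj n) *ᵥ w) = 0 := by
  rw [mulVec_mulVec, mul_sub, mul_one, consensusProj_mul_self, sub_self, zero_mulVec]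

variable {L : Matrix (Fin n) (Fin n) ℝ}

theorem exists_consensusProj_mulVec_eq_zero_and_mulVec_eq (hL : 1 ᵥ* L = 0)
    (hker : ∀ v : Fin n → ℝ, L *ᵥ v = 0 ↔ ∃ c : ℝ, v = fun _ => c)
    {z : Fin n → ℝ} (hz : ∑ i, z i = 0) :
    ∃ w, consensusProj n *ᵥ w = 0 ∧ L *ᵥ w = z := by
  obtain ⟨w, hw⟩ := exists_mulVec_eq_of_sum_eq_zero hL hker hz
  refine ⟨(1 - consensusProj n) *ᵥ w, consensusProj_mulVec_one_sub_mulVec w, ?_⟩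
  rw [sub_mulVec, one_mulVec, mulVec_sub, hw, consensusProj_mulVec, (hker _).mpr ⟨_, rfl⟩,
    sub_zero]

theorem eq_of_mulVec_eq_of_consensusProj_mulVec_eq_zero
    (hker : ∀ v : Fin n → ℝ, L *ᵥ v = 0 ↔ ∃ c : ℝ, v = fun _ => c) {a b : Fin n → ℝ}
    (ha : consensusProj n *ᵥ a = 0) (hb : consensusProj n *ᵥ b = 0) (hab : L *ᵥ a = L *ᵥ b) :
    a = b := by
  obtain ⟨c, hc⟩ := (hker (a - b)).mp (by rw [mulVec_sub, hab, sub_self])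
  have hproj : consensusProj n *ᵥ (a - b) = 0 := by rw [mulVec_sub, ha, hb, sub_self]
  rw [hc, consensusProj_mulVec_const] at hproj
  exact sub_eq_zero.mp (hc.trans hproj)

end consensusProj

section IsFixedGm

variable {n : ℕ} {L : Matrix (Fin n) (Fin n) ℝ} {g : Fin n → ℝ → ℝ} {α ζ δ η : ℝ}
  {w1 w2 x y u v : Fin n → ℝ}

theorem isFixedGm_iff :
    IsFixedGm L g α ζ δ η (w1, w2, x, y, u, v) ↔
      w1 = w1 - α • u - ζ • v ∧ w2 = (1 - consensusProj n) *ᵥ (w1 + w2 - v) ∧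
      x = w1 - v ∧ y = δ • w1 + η • w2 ∧ u = (fun i => g i (x i)) ∧ v = L *ᵥ y :=
  Iff.rfl

namespace IsFixedGm

theorem smul_v_eq (h : IsFixedGm L g α ζ δ η (w1, w2, x, y, u, v)) : ζ • v = (-α) • u := by
  have h1 := (isFixedGm_iff.mp h).1.symm
  rw [sub_sub, sub_eq_self] at h1
  rw [neg_smul]
  exact eq_neg_of_add_eq_zero_right h1

theorem consensusProj_w2 [NeZero n] (h : IsFixedGm L g α ζ δ η (w1, w2, x, y, u, v)) :
    consensusProj n *ᵥ w2 = 0 := by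
  rw [(isFixedGm_iff.mp h).2.1]
  exact consensusProj_mulVec_one_sub_mulVec _

theorem consensusProj_x [NeZero n] (h : IsFixedGm L g α ζ δ η (w1, w2, x, y, u, v)) :
    consensusProj n *ᵥ x = x := by
  obtain ⟨-, h2, h3, -⟩ := isFixedGm_iff.mp h
  have hsum : w1 + w2 - v = x + w2 := by rw [h3]; abel
  rw [hsum, sub_mulVec, one_mulVec, mulVec_add, h.consensusProj_w2, add_zero, eq_comm,
    add_comm x, add_sub_assoc, add_eq_left, sub_eq_zero] at h2
  exact h2.symm

theorem sum_u_eq_zero (hL : 1 ᵥ* L = 0) (hα : α ≠ 0)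
    (h : IsFixedGm L g α ζ δ η (w1, w2, x, y, u, v)) : ∑ i, u i = 0 := by
  have hv : ∑ i, v i = 0 := by
    rw [(isFixedGm_iff.mp h).2.2.2.2.2]
    exact sum_mulVec_eq_zero hL y
  have hsum := congrArg (fun w => ∑ i, w i) h.smul_v_eq
  simp only [Pi.smul_apply, smul_eq_mul, ← Finset.mul_sum, hv, mul_zero] at hsum
  exact (mul_eq_zero.mp hsum.symm).resolve_left (neg_ne_zero.mpr hα)

theorem x_eq [NeZero n] {μ Lf x_opt : ℝ} (hL : 1 ᵥ* L = 0) (hα : α ≠ 0) (hμLf : 0 < μ * Lf)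
    (hsec : ∀ i, SectorBound μ Lf x_opt (g i)) (hopt : ∑ i, g i x_opt = 0)
    (h : IsFixedGm L g α ζ δ η (w1, w2, x, y, u, v)) : x = fun _ => x_opt := by
  obtain ⟨c, rfl⟩ : ∃ c, x = fun _ => c := ⟨_, (consensusProj_mulVec x ▸ h.consensusProj_x).symm⟩
  have hc : ∑ i, g i c = 0 := by
    simpa only [(isFixedGm_iff.mp h).2.2.2.2.1] using h.sum_u_eq_zero hL hα
  rw [eq_of_sum_eq_zero_of_sectorBound hμLf hsec hopt hc]

theorem smul_mulVec_w2 (hLx : L *ᵥ x = 0) (h : IsFixedGm L g α ζ δ η (w1, w2, x, y, u, v)) :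
    (ζ * η) • (L *ᵥ w2) = (-α) • ((1 - δ • L) *ᵥ u) := by
  obtain ⟨-, -, h3, h4, -, h6⟩ := isFixedGm_iff.mp h
  have hw1 : w1 = x + v := by rw [h3]; abel
  have hv : v = δ • (L *ᵥ v) + η • (L *ᵥ w2) := by
    calc v = L *ᵥ y := h6
      _ = δ • (L *ᵥ v) + η • (L *ᵥ w2) := by
        rw [h4, hw1, mulVec_add, mulVec_smul, mulVec_smul, mulVec_add, hLx, zero_add]
  have hLv : ζ • (L *ᵥ v) = (-α) • (L *ᵥ u) := by rw [← mulVec_smul, h.smul_v_eq, mulVec_smul]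
  rw [sub_mulVec, one_mulVec, smul_mulVec]
  ext i
  have hv_i := congrFun hv i
  have hζv_i := congrFun h.smul_v_eq i
  have hLv_i := congrFun hLv i
  simp only [Pi.add_apply, Pi.sub_apply, Pi.smul_apply, smul_eq_mul] at hv_i hζv_i hLv_i ⊢
  linear_combination -ζ * hv_i + hζv_i - δ * hLv_i

theorem spec [NeZero n] {μ Lf x_opt : ℝ} (hL : 1 ᵥ* L = 0)
    (hker : ∀ v : Fin n → ℝ, L *ᵥ v = 0 ↔ ∃ c : ℝ, v = fun _ => c) (hα : α ≠ 0) (hζ : ζ ≠ 0)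
    (hμLf : 0 < μ * Lf) (hsec : ∀ i, SectorBound μ Lf x_opt (g i)) (hopt : ∑ i, g i x_opt = 0)
    (h : IsFixedGm L g α ζ δ η (w1, w2, x, y, u, v)) :
    x = (fun _ => x_opt) ∧ u = (fun i => g i (x i)) ∧ v = (-(α / ζ)) • u ∧ w1 = x + v ∧
      (ζ * η) • (L *ᵥ w2) = (-α) • ((1 - δ • L) *ᵥ u) ∧ consensusProj n *ᵥ w2 = 0 := by
  obtain ⟨-, -, h3, -, h5, -⟩ := isFixedGm_iff.mp h
  have hx := h.x_eq hL hα hμLf hsec hopt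
  refine ⟨hx, h5, ?_, by rw [h3]; abel, h.smul_mulVec_w2 ((hker x).mpr ⟨x_opt, hx⟩),
    h.consensusProj_w2⟩
  rw [← neg_div, div_eq_inv_mul, mul_smul, ← h.smul_v_eq, inv_smul_smul₀ hζ]

theorem unique [NeZero n] {μ Lf x_opt : ℝ} (hL : 1 ᵥ* L = 0)
    (hker : ∀ v : Fin n → ℝ, L *ᵥ v = 0 ↔ ∃ c : ℝ, v = fun _ => c) (hα : α ≠ 0) (hζ : ζ ≠ 0)
    (hη : η ≠ 0) (hμLf : 0 < μ * Lf) (hsec : ∀ i, SectorBound μ Lf x_opt (g i))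
    (hopt : ∑ i, g i x_opt = 0) {p q : (Fin n → ℝ) × (Fin n → ℝ) × (Fin n → ℝ) × (Fin n → ℝ) ×
      (Fin n → ℝ) × (Fin n → ℝ)}
    (hp : IsFixedGm L g α ζ δ η p) (hq : IsFixedGm L g α ζ δ η q) : p = q := by
  obtain ⟨w1, w2, x, y, u, v⟩ := p
  obtain ⟨w1', w2', x', y', u', v'⟩ := q
  obtain ⟨rfl, rfl, rfl, rfl, hLw2, hw2⟩ := hp.spec hL hker hα hζ hμLf hsec hopt
  obtain ⟨rfl, rfl, rfl, rfl, hLw2', hw2'⟩ := hq.spec hL hker hα hζ hμLf hsec hopt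
  obtain rfl : w2 = w2' := eq_of_mulVec_eq_of_consensusProj_mulVec_eq_zero hker hw2 hw2'
    (smul_right_injective _ (mul_ne_zero hζ hη) (hLw2.trans hLw2'.symm))
  rw [(isFixedGm_iff.mp hp).2.2.2.1, (isFixedGm_iff.mp hq).2.2.2.1]

end IsFixedGm

theorem isFixedGm_of_smul_mulVec_eq (hζ : ζ ≠ 0) (hLx : L *ᵥ x = 0)
    (hx : consensusProj n *ᵥ x = x) (hw2 : consensusProj n *ᵥ w2 = 0)
    (hLw2 : (ζ * η) • (L *ᵥ w2) = (-α) • ((1 - δ • L) *ᵥ u))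
    (hu : u = fun i => g i (x i)) (hv : v = (-(α / ζ)) • u) :
    IsFixedGm L g α ζ δ η (x + v, w2, x, δ • (x + v) + η • w2, u, v) := by
  have hζv : ζ • v = (-α) • u := by rw [hv, smul_smul, mul_neg, mul_div_cancel₀ _ hζ, neg_smul]
  refine isFixedGm_iff.mpr ⟨?_, ?_, (add_sub_cancel_right x v).symm, rfl, hu, ?_⟩
  · rw [sub_sub, hζv, neg_smul, add_neg_cancel, sub_zero]
  · rw [show x + v + w2 - v = x + w2 by abel, sub_mulVec, one_mulVec, mulVec_add, hx, hw2,
      add_zero, add_sub_cancel_left]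
  · have hLv : ζ • (L *ᵥ v) = (-α) • (L *ᵥ u) := by rw [← mulVec_smul, hζv, mulVec_smul]
    rw [sub_mulVec, one_mulVec, smul_mulVec] at hLw2
    rw [mulVec_add, mulVec_smul, mulVec_smul, mulVec_add, hLx, zero_add]
    ext i
    have hζv_i := congrFun hζv i
    have hLv_i := congrFun hLv i
    have hLw2_i := congrFun hLw2 i
    simp only [Pi.add_apply, Pi.sub_apply, Pi.smul_apply, smul_eq_mul] at hζv_i hLv_i hLw2_i ⊢
    refine mul_left_cancel₀ hζ ?_
    linear_combination hζv_i - δ * hLv_i - hLw2_i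

end IsFixedGm

theorem fixed_point_exists_unique_general {n : ℕ} (hn : 1 ≤ n) (L : Matrix (Fin n) (Fin n) ℝ)
    (hL2 : onesVec n ᵥ* L = 0)
    (hker : ∀ v : Fin n → ℝ, L *ᵥ v = 0 ↔ ∃ c : ℝ, v = fun _ => c)
    (μ Lf x_opt : ℝ) (hμ : 0 < μ) (hμL : μ ≤ Lf)
    (g : Fin n → ℝ → ℝ)
    (hopt : ∑ i, g i x_opt = 0)
    (hsec : ∀ i : Fin n, ∀ x : ℝ,
      -2 * μ * Lf * (x - x_opt) ^ 2
        + 2 * (Lf + μ) * (x - x_opt) * (g i x - g i x_opt)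
        - 2 * (g i x - g i x_opt) ^ 2 ≥ 0)
    (α ζ δ η : ℝ) (hα : α ≠ 0) (hζ : ζ ≠ 0) (hη : η ≠ 0) :
    (∃! p : (Fin n → ℝ) × (Fin n → ℝ) × (Fin n → ℝ) × (Fin n → ℝ) ×
        (Fin n → ℝ) × (Fin n → ℝ), IsFixedGm L g α ζ δ η p) ∧
    (∀ w1s w2s xs ys us vs : Fin n → ℝ,
      IsFixedGm L g α ζ δ η (w1s, w2s, xs, ys, us, vs) →
        xs = (fun _ => x_opt) ∧
        us = (fun i => g i (xs i)) ∧
        vs = (-(α / ζ)) • us ∧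
        w1s = xs + vs ∧
        (ζ * η) • (L *ᵥ w2s) = (-α) • ((1 - δ • L) *ᵥ us) ∧
        consensusProj n *ᵥ w2s = 0) := by
  have : NeZero n := ⟨by omega⟩
  have hμLf : 0 < μ * Lf := mul_pos hμ (hμ.trans_le hμL)
  refine ⟨?_, fun _ _ _ _ _ _ h => h.spec hL2 hker hα hζ hμLf hsec hopt⟩
  set u : Fin n → ℝ := fun i => g i x_opt
  have hz : ∑ i, ((-α / (ζ * η)) • ((1 - δ • L) *ᵥ u)) i = 0 := by
    simp only [Pi.smul_apply, smul_eq_mul, ← Finset.mul_sum, sub_mulVec, one_mulVec,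
      smul_mulVec, Pi.sub_apply, Finset.sum_sub_distrib, sum_mulVec_eq_zero hL2, u, hopt]
    ring
  obtain ⟨w2, hw2, hLw2⟩ := exists_consensusProj_mulVec_eq_zero_and_mulVec_eq hL2 hker hz
  have hfixed := isFixedGm_of_smul_mulVec_eq (g := g) (δ := δ) (x := fun _ => x_opt) hζ
    ((hker _).mpr ⟨x_opt, rfl⟩) (consensusProj_mulVec_const x_opt) hw2
    (by rw [hLw2, smul_smul, mul_div_cancel₀ _ (mul_ne_zero hζ hη)]) rfl rfl
  exact ⟨_, hfixed, fun q hq => hq.unique hL2 hker hα hζ hη hμLf hsec hopt hfixed⟩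

/-- Under strong connectivity (`ker L = span{𝟙}`) the projected
dynamics `G_m` has exactly one fixed point, and it satisfies `x* = x_opt 𝟙`,
`u* = F(x*)`, `v* = −(α/ζ)u*`, `w1* = x* + v*`, `ζη L ŵ2* = −α(I − δL)u*`, `Πŵ2* = 0`. -/
theorem fixed_point_exists_unique {n : ℕ} (hn : 1 ≤ n) (L : Matrix (Fin n) (Fin n) ℝ)
    (hL1 : L *ᵥ onesVec n = 0) (hL2 : onesVec n ᵥ* L = 0)
    (hker : ∀ v : Fin n → ℝ, L *ᵥ v = 0 ↔ ∃ c : ℝ, v = fun _ => c)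
    (μ Lf x_opt : ℝ) (hμ : 0 < μ) (hμL : μ ≤ Lf)
    (g : Fin n → ℝ → ℝ)
    (hopt : ∑ i, g i x_opt = 0)
    (hsec : ∀ i : Fin n, ∀ x : ℝ,
      -2 * μ * Lf * (x - x_opt) ^ 2
        + 2 * (Lf + μ) * (x - x_opt) * (g i x - g i x_opt)
        - 2 * (g i x - g i x_opt) ^ 2 ≥ 0)
    (α ζ δ η : ℝ) (hα : α ≠ 0) (hζ : ζ ≠ 0) (hη : η ≠ 0) :
    (∃! p : (Fin n → ℝ) × (Fin n → ℝ) × (Fin n → ℝ) × (Fin n → ℝ) ×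
        (Fin n → ℝ) × (Fin n → ℝ), IsFixedGm L g α ζ δ η p) ∧
    (∀ w1s w2s xs ys us vs : Fin n → ℝ,
      IsFixedGm L g α ζ δ η (w1s, w2s, xs, ys, us, vs) →
        xs = (fun _ => x_opt) ∧
        us = (fun i => g i (xs i)) ∧
        vs = (-(α / ζ)) • us ∧
        w1s = xs + vs ∧
        (ζ * η) • (L *ᵥ w2s) = (-α) • ((1 - δ • L) *ᵥ us) ∧
        consensusProj n *ᵥ w2s = 0) :=
  fixed_point_exists_unique_general hn L hL2 hker μ Lf x_opt hμ hμL g hopt hsec α ζ δ η hα hζ hη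
end

section
/- Let L ∈ ℝ^{n×n} satisfy L𝟙 = 0 and 𝟙ᵀL = 0, let ℰ ⊆ {(i,j) : i ≠ j} be a set of m directed edges with L_{ij} = 0 for i ≠ j whenever (i,j) ∉ ℰ, let D(L) be the diagonal matrix of the diagonal of L, and let Ē ∈ ℝ^{n×m} have entry Ē_{i,τ} = L_{ij} when τ = (i,j) ∈ ℰ and 0 otherwise. Fix parameters α, ζ, δ, η ∈ ℝ, gradients g_1, …, g_n : ℝ → ℝ, and an arbitrary sequence of success/loss labels for each edge and each time step. Consider the unprojected trajectory (w1^k, w2^k, φ^k) ∈ ℝⁿ × ℝⁿ × ℝ^m: v^k = D(L)(δw1^k + ηw2^k) + Ēφ^k, x^k = w1^k − v^k, u^k = F(x^k), w1^{k+1} = w1^k − αu^k − ζv^k, w2^{k+1} = w1^k + w2^k − v^k, and for each edge τ = (i,j): φ_τ^{k+1} = δw1_j^{k+1} + ηw2_j^{k+1} if τ succeeds at step k, φ_τ^{k+1} = φ_τ^k + ηx_i^k if τ is lost; and the projected trajectory (ŵ1^k, ŵ2^k, φ̂^k) with the same loss labels: v̂^k = D(L)(δŵ1^k + ηŵ2^k)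 + Ēφ̂^k, x̂^k = ŵ1^k − v̂^k, û^k = F(x̂^k), ŵ1^{k+1} = ŵ1^k − αû^k − ζv̂^k, ŵ2^{k+1} = (I − Π)(ŵ1^k + ŵ2^k − v̂^k), and φ̂_τ^{k+1} = δŵ1_j^{k+1} + ηŵ2_j^{k+1} on success, φ̂_τ^{k+1} = φ̂_τ^k + η·e_iᵀ(I − Π)x̂^k on loss. If ŵ1^0 = w1^0, ŵ2^0 = (I − Π)w2^0, and φ̂_τ^0 = φ_τ^0 − (η/n)𝟙ᵀw2^0 for all τ ∈ ℰ, then for all k ≥ 0: ŵ1^k = w1^k, x̂^k = x^k, ŵ2^k = (I − Π)w2^k, and φ̂_τ^k = φ_τ^k − (η/n)𝟙ᵀw2^k for all τ ∈ ℰ. -/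
open Matrix

/-- The matrix `Ē ∈ ℝ^{n×m}` with `Ē_{i,τ} = L_{ij}` when `τ = (i,j) ∈ ℰ`, else `0`. -/
noncomputable def edgeMatrix {n m : ℕ} (L : Matrix (Fin n) (Fin n) ℝ)
    (ε : Fin m → Fin n × Fin n) : Matrix (Fin n) (Fin m) ℝ :=
  Matrix.of fun i τ => if (ε τ).1 = i then L (ε τ).1 (ε τ).2 else 0

/-- `D(L)`: the diagonal matrix of the diagonal of `L`. -/
noncomputable def diagOf {n : ℕ} (L : Matrix (Fin n) (Fin n) ℝ) :
    Matrix (Fin n) (Fin n) ℝ :=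
  Matrix.diagonal fun i => L i i

/-!
Write `c = (1/n) 𝟙ᵀ w2` for the consensus component of `w2`. The invariant is
`ŵ2 = w2 - c 𝟙` and `φ̂ = φ - η c 𝟙`. Shifting `w2` by `c 𝟙` and `φ` by `η c 𝟙` changes `v` by
`η c (D(L) 𝟙 + Ē 𝟙) = η c L 𝟙 = 0`, because row `i` of `Ē` collects exactly the off-diagonal
entries of row `i` of `L`. Hence `v̂ = v`, so `x̂ = x` and `ŵ1 = w1`; the invariant propagates since
`I - Π` is idempotent and `c` grows by `(1/n) 𝟙ᵀ x` at each step, which is exactly the consensus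
part of `η x` that the loss update of `φ̂` removes.
-/

section Consensus

variable {n : ℕ}

lemma one_sub_consensusProj_mulVec (y : Fin n → ℝ) :
    (1 - consensusProj n) *ᵥ y = y - ((n : ℝ)⁻¹ * ∑ j, y j) • 1 := by
  rw [sub_mulVec, one_mulVec]
  ext i
  simp [consensusProj, mulVec, dotProduct, Finset.mul_sum]

lemma sum_one_sub_consensusProj_mulVec (y : Fin n → ℝ) :
    ∑ i, ((1 - consensusProj n) *ᵥ y) i = 0 := by
  rcases Nat.eq_zero_or_pos n with rfl | hn
  · simp
  · have : (n : ℝ) ≠ 0 := by positivity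
    simp [one_sub_consensusProj_mulVec, Finset.sum_sub_distrib, this]

lemma one_sub_consensusProj_mulVec_idem (y : Fin n → ℝ) :
    (1 - consensusProj n) *ᵥ ((1 - consensusProj n) *ᵥ y) = (1 - consensusProj n) *ᵥ y := by
  rw [one_sub_consensusProj_mulVec ((1 - consensusProj n) *ᵥ y),
    sum_one_sub_consensusProj_mulVec, mul_zero, zero_smul, sub_zero]

end Consensus

section EdgeMatrix

variable {n m : ℕ} {L : Matrix (Fin n) (Fin n) ℝ} {ε : Fin m → Fin n × Fin n}

lemma edgeMatrix_mulVec_one_apply (hεinj : Function.Injective ε)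
    (hεne : ∀ τ, (ε τ).1 ≠ (ε τ).2)
    (hLsparse : ∀ i j : Fin n, i ≠ j → (∀ τ, ε τ ≠ (i, j)) → L i j = 0) (i : Fin n) :
    (edgeMatrix L ε *ᵥ 1) i = ∑ j ∈ Finset.univ.erase i, L i j := by
  set S : Finset (Fin m) := Finset.univ.filter fun τ => (ε τ).1 = i
  have hinj : Set.InjOn (fun τ => (ε τ).2) S := by
    intro a ha b hb hab
    simp only [S, Finset.coe_filter, Finset.mem_univ, true_and, Set.mem_ofPred_eq] at ha hb
    exact hεinj (Prod.ext (ha.trans hb.symm) hab)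
  calc (edgeMatrix L ε *ᵥ 1) i = ∑ τ ∈ S, L i (ε τ).2 := by
        simp only [S, Finset.sum_filter, mulVec, dotProduct, edgeMatrix, of_apply, Pi.one_apply,
          mul_one]
        refine Finset.sum_congr rfl fun τ _ => ?_
        split_ifs with h <;> simp [h]
    _ = ∑ j ∈ S.image fun τ => (ε τ).2, L i j := (Finset.sum_image hinj).symm
    _ = ∑ j ∈ Finset.univ.erase i, L i j := by
        refine Finset.sum_subset ?_ fun j hj hjS => hLsparse i j ?_ ?_
        · intro j hj
          obtain ⟨τ, hτ, rfl⟩ := Finset.mem_image.1 hj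
          simp only [S, Finset.mem_filter] at hτ
          exact Finset.mem_erase.2 ⟨fun h => hεne τ (hτ.2.trans h.symm), Finset.mem_univ _⟩
        · exact (Finset.ne_of_mem_erase hj).symm
        · intro τ hτ
          exact hjS (Finset.mem_image.2 ⟨τ, by simp [S, hτ], by simp [hτ]⟩)

lemma diagOf_mulVec_one_add_edgeMatrix_mulVec_one (hεinj : Function.Injective ε)
    (hεne : ∀ τ, (ε τ).1 ≠ (ε τ).2)
    (hLsparse : ∀ i j : Fin n, i ≠ j → (∀ τ, ε τ ≠ (i, j)) → L i j = 0) :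
    diagOf L *ᵥ 1 + edgeMatrix L ε *ᵥ 1 = L *ᵥ 1 := by
  ext i
  have hdiag : (diagOf L *ᵥ 1) i = L i i := by simp [diagOf, mulVec_diagonal]
  rw [Pi.add_apply, hdiag, edgeMatrix_mulVec_one_apply hεinj hεne hLsparse,
    Finset.add_sum_erase _ _ (Finset.mem_univ i)]
  simp [mulVec, dotProduct]

end EdgeMatrix

lemma mulVec_sub_const_add_mulVec_sub_const {ρ ι κ R : Type*} [Fintype ι] [Fintype κ]
    [CommRing R] {A : Matrix ρ ι R} {B : Matrix ρ κ R} (h : A *ᵥ 1 + B *ᵥ 1 = 0) (c : R)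
    (y : ι → R) (ψ : κ → R) :
    A *ᵥ (y - c • 1) + B *ᵥ (ψ - c • 1) = A *ᵥ y + B *ᵥ ψ := by
  rw [mulVec_sub, mulVec_sub, mulVec_smul, mulVec_smul]
  linear_combination (norm := module) -c • h

lemma mulVec_add_mulVec_eq_of_projected {ρ κ : Type*} [Fintype κ] {n : ℕ}
    {A : Matrix ρ (Fin n) ℝ} {B : Matrix ρ κ ℝ} (h : A *ᵥ 1 + B *ᵥ 1 = 0) (δ η : ℝ)
    (a b : Fin n → ℝ) (ψ : κ → ℝ) :
    A *ᵥ (δ • a + η • ((1 - consensusProj n) *ᵥ b)) +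
        B *ᵥ (fun τ => ψ τ - (η / n) * ∑ i, b i) =
      A *ᵥ (δ • a + η • b) + B *ᵥ ψ := by
  set c := (n : ℝ)⁻¹ * ∑ i, b i
  have hy : δ • a + η • ((1 - consensusProj n) *ᵥ b) = δ • a + η • b - (η * c) • 1 := by
    rw [one_sub_consensusProj_mulVec]
    module
  have hψ : (fun τ => ψ τ - (η / n) * ∑ i, b i) = ψ - (η * c) • 1 := funext fun τ => by
    simp only [Pi.sub_apply, Pi.smul_apply, Pi.one_apply, smul_eq_mul, c]
    ring
  rw [hy, hψ, mulVec_sub_const_add_mulVec_sub_const h]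

theorem edgewise_projection_preserves_trajectories_general {n m : ℕ}
    (L : Matrix (Fin n) (Fin n) ℝ)
    (hL1 : L *ᵥ (fun _ => (1 : ℝ)) = 0)
    (ε : Fin m → Fin n × Fin n) (hεinj : Function.Injective ε)
    (hεne : ∀ τ, (ε τ).1 ≠ (ε τ).2)
    (hLsparse : ∀ i j : Fin n, i ≠ j → (∀ τ, ε τ ≠ (i, j)) → L i j = 0)
    (α ζ δ η : ℝ) (g : Fin n → ℝ → ℝ)
    (succ : ℕ → Fin m → Bool)  -- success/loss labels, `true` = success
    -- unprojected trajectory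
    (w1 w2 v x u : ℕ → Fin n → ℝ) (φ : ℕ → Fin m → ℝ)
    (hv : ∀ k, v k = diagOf L *ᵥ (δ • w1 k + η • w2 k) + edgeMatrix L ε *ᵥ φ k)
    (hx : ∀ k, x k = w1 k - v k)
    (hu : ∀ k, u k = fun i => g i (x k i))
    (hw1 : ∀ k, w1 (k + 1) = w1 k - α • u k - ζ • v k)
    (hw2 : ∀ k, w2 (k + 1) = w1 k + w2 k - v k)
    (hφ : ∀ k τ, φ (k + 1) τ =
      if succ k τ then δ * w1 (k + 1) (ε τ).2 + η * w2 (k + 1) (ε τ).2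
      else φ k τ + η * x k (ε τ).1)
    -- projected trajectory, same loss labels
    (w1h w2h vh xh uh : ℕ → Fin n → ℝ) (φh : ℕ → Fin m → ℝ)
    (hvh : ∀ k, vh k = diagOf L *ᵥ (δ • w1h k + η • w2h k) + edgeMatrix L ε *ᵥ φh k)
    (hxh : ∀ k, xh k = w1h k - vh k)
    (huh : ∀ k, uh k = fun i => g i (xh k i))
    (hw1h : ∀ k, w1h (k + 1) = w1h k - α • uh k - ζ • vh k)
    (hw2h : ∀ k, w2h (k + 1) = (1 - consensusProj n) *ᵥ (w1h k + w2h k - vh k))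
    (hφh : ∀ k τ, φh (k + 1) τ =
      if succ k τ then δ * w1h (k + 1) (ε τ).2 + η * w2h (k + 1) (ε τ).2
      else φh k τ + η * ((1 - consensusProj n) *ᵥ xh k) (ε τ).1)
    -- matched initial conditions
    (hinit1 : w1h 0 = w1 0)
    (hinit2 : w2h 0 = (1 - consensusProj n) *ᵥ w2 0)
    (hinit3 : ∀ τ, φh 0 τ = φ 0 τ - (η / n) * ∑ i, w2 0 i) :
    ∀ k : ℕ,
      w1h k = w1 k ∧
      xh k = x k ∧
      w2h k = (1 - consensusProj n) *ᵥ w2 k ∧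
      ∀ τ, φh k τ = φ k τ - (η / n) * ∑ i, w2 k i := by
  have hkernel : diagOf L *ᵥ 1 + edgeMatrix L ε *ᵥ 1 = 0 :=
    (diagOf_mulVec_one_add_edgeMatrix_mulVec_one hεinj hεne hLsparse).trans hL1
  have hv_eq : ∀ k, w1h k = w1 k → w2h k = (1 - consensusProj n) *ᵥ w2 k →
      (∀ τ, φh k τ = φ k τ - (η / n) * ∑ i, w2 k i) → vh k = v k := by
    intro k h1 h2 h3
    rw [hvh, hv, h1, h2, funext h3, mulVec_add_mulVec_eq_of_projected hkernel]
  have hinv : ∀ k, w1h k = w1 k ∧ w2h k = (1 - consensusProj n) *ᵥ w2 k ∧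
      ∀ τ, φh k τ = φ k τ - (η / n) * ∑ i, w2 k i := by
    intro k
    induction k with
    | zero => exact ⟨hinit1, hinit2, hinit3⟩
    | succ k ih =>
      obtain ⟨h1, h2, h3⟩ := ih
      have hvk := hv_eq k h1 h2 h3
      have hxk : xh k = x k := by rw [hxh, hx, h1, hvk]
      have h1' : w1h (k + 1) = w1 (k + 1) := by rw [hw1h, hw1, huh, hu, hxk, h1, hvk]
      have h2' : w2h (k + 1) = (1 - consensusProj n) *ᵥ w2 (k + 1) := by
        rw [hw2h, hw2, h1, h2, hvk, add_sub_right_comm, mulVec_add,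
          one_sub_consensusProj_mulVec_idem, ← mulVec_add, add_sub_right_comm]
      have hsum : ∑ i, w2 (k + 1) i = ∑ i, w2 k i + ∑ i, x k i := by
        rw [← Finset.sum_add_distrib, show w2 (k + 1) = w2 k + x k by rw [hw2, hx]; abel]
        rfl
      refine ⟨h1', h2', fun τ => ?_⟩
      rw [hφh, hφ]
      cases succ k τ <;>
        simp only [Bool.false_eq_true, if_false, if_true, h3, hxk, h1', h2', hsum,
          one_sub_consensusProj_mulVec, Pi.sub_apply, Pi.smul_apply, Pi.one_apply, smul_eq_mul] <;>
        ring
  intro k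
  obtain ⟨h1, h2, h3⟩ := hinv k
  exact ⟨h1, by rw [hxh, hx, h1, hv_eq k h1 h2 h3], h2, h3⟩

/-- Theorem 4: the projected edgewise packet-loss trajectory has the
same `w1` and `x` trajectories as the unprojected one, with `ŵ2^k = (I−Π)w2^k` and
`φ̂_τ^k = φ_τ^k − (η/n)𝟙ᵀw2^k`, provided the initial conditions are matched in this way. -/
theorem edgewise_projection_preserves_trajectories {n m : ℕ} (hn : 1 ≤ n)
    (L : Matrix (Fin n) (Fin n) ℝ)
    (hL1 : L *ᵥ (fun _ => (1 : ℝ)) = 0) (hL2 : (fun _ => (1 : ℝ)) ᵥ* L = 0)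
    (ε : Fin m → Fin n × Fin n) (hεinj : Function.Injective ε)
    (hεne : ∀ τ, (ε τ).1 ≠ (ε τ).2)
    (hLsparse : ∀ i j : Fin n, i ≠ j → (∀ τ, ε τ ≠ (i, j)) → L i j = 0)
    (α ζ δ η : ℝ) (g : Fin n → ℝ → ℝ)
    (succ : ℕ → Fin m → Bool)  -- success/loss labels, `true` = success
    -- unprojected trajectory
    (w1 w2 v x u : ℕ → Fin n → ℝ) (φ : ℕ → Fin m → ℝ)
    (hv : ∀ k, v k = diagOf L *ᵥ (δ • w1 k + η • w2 k) + edgeMatrix L ε *ᵥ φ k)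
    (hx : ∀ k, x k = w1 k - v k)
    (hu : ∀ k, u k = fun i => g i (x k i))
    (hw1 : ∀ k, w1 (k + 1) = w1 k - α • u k - ζ • v k)
    (hw2 : ∀ k, w2 (k + 1) = w1 k + w2 k - v k)
    (hφ : ∀ k τ, φ (k + 1) τ =
      if succ k τ then δ * w1 (k + 1) (ε τ).2 + η * w2 (k + 1) (ε τ).2
      else φ k τ + η * x k (ε τ).1)
    -- projected trajectory, same loss labels
    (w1h w2h vh xh uh : ℕ → Fin n → ℝ) (φh : ℕ → Fin m → ℝ)
    (hvh : ∀ k, vh k = diagOf L *ᵥ (δ • w1h k + η • w2h k) + edgeMatrix L ε *ᵥ φh k)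
    (hxh : ∀ k, xh k = w1h k - vh k)
    (huh : ∀ k, uh k = fun i => g i (xh k i))
    (hw1h : ∀ k, w1h (k + 1) = w1h k - α • uh k - ζ • vh k)
    (hw2h : ∀ k, w2h (k + 1) = (1 - consensusProj n) *ᵥ (w1h k + w2h k - vh k))
    (hφh : ∀ k τ, φh (k + 1) τ =
      if succ k τ then δ * w1h (k + 1) (ε τ).2 + η * w2h (k + 1) (ε τ).2
      else φh k τ + η * ((1 - consensusProj n) *ᵥ xh k) (ε τ).1)
    -- matched initial conditions
    (hinit1 : w1h 0 = w1 0)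
    (hinit2 : w2h 0 = (1 - consensusProj n) *ᵥ w2 0)
    (hinit3 : ∀ τ, φh 0 τ = φ 0 τ - (η / n) * ∑ i, w2 0 i) :
    ∀ k : ℕ,
      w1h k = w1 k ∧
      xh k = x k ∧
      w2h k = (1 - consensusProj n) *ᵥ w2 k ∧
      ∀ τ, φh k τ = φ k τ - (η / n) * ∑ i, w2 k i :=
  edgewise_projection_preserves_trajectories_general L hL1 ε hεinj hεne hLsparse α ζ δ η g succ w1
    w2 v x u φ hv hx hu hw1 hw2 hφ w1h w2h vh xh uh φh hvh hxh huh hw1h hw2h hφh hinit1 hinit2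
    hinit3
end

section
/- Let L ∈ ℝ^{n×n} satisfy L𝟙 = 0, let g_1, …, g_n : ℝ → ℝ, and let α, ζ, δ, η ∈ ℝ. Consider the unprojected Algorithm 1 trajectory (w1^k, w2^k): y^k = δw1^k + ηw2^k, v^k = Ly^k, x^k = w1^k − v^k, u^k = F(x^k), w1^{k+1} = w1^k − αu^k − ζv^k, w2^{k+1} = w1^k + w2^k − v^k; and the projected trajectory (ŵ1^k, ŵ2^k): ŷ^k = δŵ1^k + ηŵ2^k, v̂^k = Lŷ^k, x̂^k = ŵ1^k − v̂^k, û^k = F(x̂^k), ŵ1^{k+1} = ŵ1^k − αû^k − ζv̂^k, ŵ2^{k+1} = (I − Π)(ŵ1^k + ŵ2^k − v̂^k). If ŵ1^0 = w1^0 and ŵ2^0 = (I − Π)w2^0, then for all k ≥ 0: ŵ1^k = w1^k, x̂^k = x^k, û^k = u^k, v̂^k = v^k, and ŵ2^k = (I − Π)w2^k. -/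
open Matrix

lemma proj_mulVec {n : ℕ} (z : Fin n → ℝ) :
    consensusProj n *ᵥ z = ((n : ℝ)⁻¹ * ∑ j, z j) • (fun _ => (1:ℝ)) := by
  funext i
  simp [consensusProj, mulVec, dotProduct, Finset.mul_sum]

lemma L_proj {n : ℕ} (L : Matrix (Fin n) (Fin n) ℝ)
    (hL1 : L *ᵥ (fun _ => (1 : ℝ)) = 0) (z : Fin n → ℝ) :
    L *ᵥ (consensusProj n *ᵥ z) = 0 := by
  rw [proj_mulVec, mulVec_smul, hL1, smul_zero]

lemma proj_idem {n : ℕ} (z : Fin n → ℝ) :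
    consensusProj n *ᵥ (consensusProj n *ᵥ z) = consensusProj n *ᵥ z := by
  rcases Nat.eq_zero_or_pos n with h | h
  · subst h; funext i; exact i.elim0
  · rw [proj_mulVec z, mulVec_smul, proj_mulVec]
    have : (∑ _j : Fin n, (1:ℝ)) = n := by simp
    rw [this, smul_smul]
    congr 1
    field_simp

/-- Projecting the internal state `w2` of Algorithm 1 onto the
disagreement subspace leaves the trajectories of `w1`, `x`, `u`, `v` unchanged, and
`ŵ2^k = (I − Π)w2^k`, provided `ŵ1^0 = w1^0` and `ŵ2^0 = (I − Π)w2^0`. -/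
theorem projection_preserves_trajectories {n : ℕ}
    (L : Matrix (Fin n) (Fin n) ℝ) (hL1 : L *ᵥ (fun _ => (1 : ℝ)) = 0)
    (g : Fin n → ℝ → ℝ) (α ζ δ η : ℝ)
    -- unprojected trajectory
    (w1 w2 y v x u : ℕ → Fin n → ℝ)
    (hy : ∀ k, y k = δ • w1 k + η • w2 k)
    (hv : ∀ k, v k = L *ᵥ y k)
    (hx : ∀ k, x k = w1 k - v k)
    (hu : ∀ k, u k = fun i => g i (x k i))
    (hw1 : ∀ k, w1 (k + 1) = w1 k - α • u k - ζ • v k)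
    (hw2 : ∀ k, w2 (k + 1) = w1 k + w2 k - v k)
    -- projected trajectory
    (w1h w2h yh vh xh uh : ℕ → Fin n → ℝ)
    (hyh : ∀ k, yh k = δ • w1h k + η • w2h k)
    (hvh : ∀ k, vh k = L *ᵥ yh k)
    (hxh : ∀ k, xh k = w1h k - vh k)
    (huh : ∀ k, uh k = fun i => g i (xh k i))
    (hw1h : ∀ k, w1h (k + 1) = w1h k - α • uh k - ζ • vh k)
    (hw2h : ∀ k, w2h (k + 1) = (1 - consensusProj n) *ᵥ (w1h k + w2h k - vh k))
    -- matched initial conditions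
    (hinit1 : w1h 0 = w1 0)
    (hinit2 : w2h 0 = (1 - consensusProj n) *ᵥ w2 0) :
    ∀ k : ℕ,
      w1h k = w1 k ∧ xh k = x k ∧ uh k = u k ∧ vh k = v k ∧
      w2h k = (1 - consensusProj n) *ᵥ w2 k := by
  -- key: if states match at step k, then v matches
  have hvkey : ∀ k, w1h k = w1 k → w2h k = (1 - consensusProj n) *ᵥ w2 k →
      vh k = v k := by
    intro k h1 h2
    rw [hvh, hyh, h1, h2, hv, hy]
    simp [sub_mulVec, one_mulVec, mulVec_add, mulVec_smul, mulVec_sub,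
      L_proj L hL1]
  -- main induction
  intro k
  induction k with
  | zero =>
    have hv0 := hvkey 0 hinit1 hinit2
    have hx0 : xh 0 = x 0 := by rw [hxh, hx, hinit1, hv0]
    refine ⟨hinit1, hx0, ?_, hv0, hinit2⟩
    rw [huh, hu, hx0]
  | succ k ih =>
    obtain ⟨h1, hxk, huk, hvk, h2⟩ := ih
    have h1' : w1h (k+1) = w1 (k+1) := by
      rw [hw1h, hw1, h1, huk, hvk]
    have h2' : w2h (k+1) = (1 - consensusProj n) *ᵥ w2 (k+1) := by
      rw [hw2h, hw2, h1, h2, hvk]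
      simp only [sub_mulVec, one_mulVec, mulVec_add, mulVec_sub, proj_idem]
      abel
    have hv' := hvkey (k+1) h1' h2'
    have hx' : xh (k+1) = x (k+1) := by rw [hxh, hx, h1', hv']
    exact ⟨h1', hx', by rw [huh, hu, hx'], hv', h2'⟩
end

section
/- Assume L ∈ ℝ^{n×n} satisfies L𝟙 = 0, 𝟙ᵀL = 0, and ker L = span{𝟙}; let the gradients g_i satisfy the sector bound on (μ, L_f) about x_opt with Σᵢ g_i(x_opt) = 0, and let α ≠ 0, ζ ≠ 0, η ≠ 0, δ ∈ ℝ. Let (w1*, ŵ2*) be the unique fixed point of the projected dynamics G_m and set r* = δw1* + ηŵ2*, v* = Lr*, x* = w1* − v*, u* = F(x*). Then the point (w1*, ŵ2*, r*) is a fixed point of BOTH the success map and the loss map of the synchronous packet-loss dynamics, i.e., with v = Lr*, x = w1* − v, u = F(x): w1* = w1* − αu − ζv, ŵ2* = (I − Π)(w1* + ŵ2* − v), r* = δw1* + ηŵ2* (success) and r* = r* (loss); and at this point x = x_opt 𝟙. -/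
open Matrix

/-- The fixed point of `G_m`, augmented with the memory state
`r* = δw1* + ηŵ2*`, is a fixed point of both the success map and the loss map of the
synchronous packet-loss dynamics, and at this point the estimate is `x_opt 𝟙`. -/
theorem sync_loss_fixed_point {n : ℕ} (hn : 1 ≤ n)
    (L : Matrix (Fin n) (Fin n) ℝ)
    (hL1 : L *ᵥ onesVec n = 0) (hL2 : onesVec n ᵥ* L = 0)
    (hker : ∀ v : Fin n → ℝ, L *ᵥ v = 0 ↔ ∃ c : ℝ, v = fun _ => c)
    (μ Lf x_opt : ℝ) (hμ : 0 < μ) (hμL : μ ≤ Lf)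
    (g : Fin n → ℝ → ℝ)
    (hopt : ∑ i, g i x_opt = 0)
    (hsec : ∀ i : Fin n, ∀ x : ℝ,
      -2 * μ * Lf * (x - x_opt) ^ 2
        + 2 * (Lf + μ) * (x - x_opt) * (g i x - g i x_opt)
        - 2 * (g i x - g i x_opt) ^ 2 ≥ 0)
    (α ζ δ η : ℝ) (hα : α ≠ 0) (hζ : ζ ≠ 0) (hη : η ≠ 0)
    -- (w1*, ŵ2*) is a fixed point of the projected dynamics G_m
    (w1s w2s xs ys us vs : Fin n → ℝ)
    (hfix1 : w1s = w1s - α • us - ζ • vs)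
    (hfix2 : w2s = (1 - consensusProj n) *ᵥ (w1s + w2s - vs))
    (hfix3 : xs = w1s - vs)
    (hfix4 : ys = δ • w1s + η • w2s)
    (hfix5 : us = fun i => g i (xs i))
    (hfix6 : vs = L *ᵥ ys)
    -- the augmented memory state
    (rs : Fin n → ℝ) (hrs : rs = δ • w1s + η • w2s) :
    ∀ v x u : Fin n → ℝ,
      v = L *ᵥ rs → x = w1s - v → u = (fun i => g i (x i)) →
        w1s = w1s - α • u - ζ • v ∧
        w2s = (1 - consensusProj n) *ᵥ (w1s + w2s - v) ∧
        rs = δ • w1s + η • w2s ∧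
        rs = rs ∧
        x = fun _ => x_opt := by
  intro v x u hv hx hu
  have hrsy : rs = ys := by rw [hrs, hfix4]
  have hv' : v = vs := by rw [hv, hrsy, ← hfix6]
  have hx' : x = xs := by rw [hx, hv', ← hfix3]
  have hu' : u = us := by rw [hu, hx', ← hfix5]
  -- the constant value of xs
  set c : ℝ := (n : ℝ)⁻¹ * ∑ j, (w1s j + w2s j - vs j) with hc
  have hx_eq : ∀ i, xs i = c := by
    intro i
    have h := congrFun hfix2 i
    simp only [Matrix.mulVec, dotProduct, Matrix.sub_apply, Matrix.one_apply,
      consensusProj, Matrix.of_apply, Pi.add_apply, Pi.sub_apply, ite_mul,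
      one_mul, zero_mul, sub_mul] at h
    rw [Finset.sum_sub_distrib, Finset.sum_ite_eq (Finset.univ) i
      (fun j => w1s j + w2s j - vs j), ← Finset.mul_sum] at h
    simp at h
    have h3 := congrFun hfix3 i
    simp [Pi.sub_apply] at h3
    rw [h3, hc, Finset.sum_sub_distrib]
    linarith [h]
  -- sum of vs is zero
  have hcol : ∀ j, ∑ i, L i j = 0 := by
    intro j
    have := congrFun hL2 j
    simpa [Matrix.vecMul, dotProduct, onesVec] using this
  have hsumv : ∑ i, vs i = 0 := by
    rw [hfix6]
    simp only [Matrix.mulVec, dotProduct]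
    rw [Finset.sum_comm]
    have : ∀ j, ∑ i, L i j * ys j = 0 := by
      intro j; rw [← Finset.sum_mul, hcol j, zero_mul]
    simp [this]
  -- sum of us is zero
  have hui : ∀ i, α * us i = -(ζ * vs i) := by
    intro i
    have h := congrFun hfix1 i
    simp [Pi.sub_apply, Pi.smul_apply, smul_eq_mul] at h
    linarith
  have hsumu : ∑ i, us i = 0 := by
    have h : α * ∑ i, us i = -(ζ * ∑ i, vs i) := by
      rw [Finset.mul_sum, Finset.mul_sum, ← Finset.sum_neg_distrib]
      exact Finset.sum_congr rfl fun i _ => hui i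
    rw [hsumv, mul_zero, neg_zero] at h
    exact (mul_eq_zero.mp h).resolve_left hα
  -- sum of g i c is zero
  have hsumg : ∑ i, g i c = 0 := by
    rw [← hsumu, hfix5]
    exact Finset.sum_congr rfl fun i _ => by simp [hx_eq i]
  -- sector bound summed ⇒ c = x_opt
  have hsumsec : (0:ℝ) ≤ ∑ i, (-2 * μ * Lf * (c - x_opt) ^ 2
      + 2 * (Lf + μ) * (c - x_opt) * (g i c - g i x_opt)
      - 2 * (g i c - g i x_opt) ^ 2) :=
    Finset.sum_nonneg fun i _ => hsec i c
  have hsq : (0:ℝ) ≤ ∑ i, (g i c - g i x_opt) ^ 2 :=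
    Finset.sum_nonneg fun i _ => sq_nonneg _
  have hexp : ∑ i, (-2 * μ * Lf * (c - x_opt) ^ 2
      + 2 * (Lf + μ) * (c - x_opt) * (g i c - g i x_opt)
      - 2 * (g i c - g i x_opt) ^ 2)
      = (n : ℝ) * (-2 * μ * Lf * (c - x_opt) ^ 2)
        + 2 * (Lf + μ) * (c - x_opt) * (∑ i, g i c - ∑ i, g i x_opt)
        - 2 * ∑ i, (g i c - g i x_opt) ^ 2 := by
    rw [Finset.sum_sub_distrib, Finset.sum_add_distrib, Finset.sum_const,
      Finset.card_univ, Fintype.card_fin, nsmul_eq_mul, ← Finset.mul_sum,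
      ← Finset.sum_sub_distrib, Finset.mul_sum]
    simp [Finset.mul_sum]
  rw [hexp, hsumg, hopt] at hsumsec
  have hn' : (1:ℝ) ≤ (n:ℝ) := by exact_mod_cast hn
  have hLf : 0 < Lf := lt_of_lt_of_le hμ hμL
  have h1 : (c - x_opt) ^ 2 ≤ 0 := by
    nlinarith [mul_pos hμ hLf,
      mul_nonneg (mul_nonneg (sub_nonneg.mpr hn') (mul_pos hμ hLf).le)
        (sq_nonneg (c - x_opt))]
  have h2 : (c - x_opt) ^ 2 = 0 := le_antisymm h1 (sq_nonneg _)
  have hceq : c = x_opt := by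
    have h3 := sq_eq_zero_iff.mp h2; linarith
  refine ⟨by rw [hv', hu']; exact hfix1, by rw [hv']; exact hfix2, hrs, rfl, ?_⟩
  funext i
  rw [hx']
  simp [hx_eq i, hceq]
end
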